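/- arXiv:1210.4832 — 2 statements merged into one kernel-verified Lean document; each statement's English description precedes it below -/
import Mathlib

section
/- For w_p(s) = s^{1/p} with p > 1, Θ(w_p) = 1, where Θ(w) = inf over nonzero measurable f on [0,1] of [sup_{t∈(0,1)} w(t)f**(t)] / [sup_{t∈(0,1)} w(t)f*(t)]. -/
open MeasureTheory Set Real

/-- The decreasing rearrangement of `f : [0,1] → ℝ` (Lebesgue measure). -/
noncomputable def rearrangement (f : ℝ → ℝ) (t : ℝ) : ℝ :=
  sInf {s : ℝ | 0 ≤ s ∧
    (volume.restrict (Set.Icc (0:ℝ) 1)) {x | s < |f x|} ≤ ENNReal.ofReal t}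

/-- The maximal function `f**(t) = t⁻¹ ∫₀ᵗ f*(s) ds`. -/
noncomputable def maximalFn (f : ℝ → ℝ) (t : ℝ) : ℝ :=
  t⁻¹ * ∫ s in (0:ℝ)..t, rearrangement f s

lemma rearr_nonneg (f : ℝ → ℝ) (t : ℝ) : 0 ≤ rearrangement f t :=
  Real.sInf_nonneg (fun _ hs => hs.1)

lemma rearr_set_nonempty {f : ℝ → ℝ} (hf : Measurable f) {t : ℝ} (ht : 0 < t) :
    {s : ℝ | 0 ≤ s ∧
      (volume.restrict (Set.Icc (0:ℝ) 1)) {x | s < |f x|} ≤ ENNReal.ofReal t}.Nonempty := by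
  set μ := volume.restrict (Set.Icc (0:ℝ) 1) with hμ
  have hmeas : ∀ n : ℕ, NullMeasurableSet {x : ℝ | (n:ℝ) < |f x|} μ := fun n =>
    (measurableSet_lt measurable_const hf.abs).nullMeasurableSet
  have hanti : Antitone fun n : ℕ => {x : ℝ | (n:ℝ) < |f x|} := by
    intro m n hmn x hx
    exact lt_of_le_of_lt (show (m:ℝ) ≤ n by exact_mod_cast hmn) hx
  have hfin : ∀ n : ℕ, μ {x : ℝ | (n:ℝ) < |f x|} ≠ ⊤ := by
    intro n
    refine ne_of_lt (lt_of_le_of_lt (measure_mono (subset_univ _)) ?_)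
    rw [hμ, Measure.restrict_apply_univ, Real.volume_Icc]
    simp
  have hempty : (⋂ n : ℕ, {x : ℝ | (n:ℝ) < |f x|}) = ∅ := by
    ext x
    simp only [mem_iInter, mem_setOf_eq, mem_empty_iff_false, iff_false, not_forall, not_lt]
    obtain ⟨n, hn⟩ := exists_nat_gt |f x|
    exact ⟨n, hn.le⟩
  have hten : Filter.Tendsto (fun n : ℕ => μ {x : ℝ | (n:ℝ) < |f x|}) Filter.atTop (nhds 0) := by
    have := tendsto_measure_iInter_atTop (μ := μ) hmeas hanti ⟨0, hfin 0⟩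
    rwa [hempty, measure_empty] at this
  have hev := hten.eventually (gt_mem_nhds (ENNReal.ofReal_pos.2 ht))
  obtain ⟨n, hn⟩ := hev.exists
  exact ⟨n, n.cast_nonneg, hn.le⟩

lemma rearr_antitoneOn {f : ℝ → ℝ} (hf : Measurable f) :
    AntitoneOn (rearrangement f) (Set.Ioi 0) := by
  intro a ha b _ hab
  exact csInf_le_csInf ⟨0, fun x hx => hx.1⟩ (rearr_set_nonempty hf ha)
    (fun s hs => ⟨hs.1, hs.2.trans (ENNReal.ofReal_le_ofReal hab)⟩)

lemma rearr_one {τ : ℝ} (hτ : τ < 1) : rearrangement (fun _ => (1:ℝ)) τ = 1 := by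
  have hset : {s : ℝ | 0 ≤ s ∧
      (volume.restrict (Set.Icc (0:ℝ) 1)) {x | s < |(fun _ : ℝ => (1:ℝ)) x|} ≤ ENNReal.ofReal τ}
      = Set.Ici 1 := by
    ext s
    simp only [abs_one, mem_setOf_eq, mem_Ici]
    constructor
    · rintro ⟨hs0, hs⟩
      by_contra h
      push_neg at h
      have huniv : {x : ℝ | s < 1} = univ := eq_univ_of_forall fun _ => h
      rw [huniv, Measure.restrict_apply_univ, Real.volume_Icc, sub_zero,
        ENNReal.ofReal_one] at hs
      exact absurd (ENNReal.one_le_ofReal.1 hs) (not_le.2 hτ)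
    · intro h1
      refine ⟨le_trans zero_le_one h1, ?_⟩
      have he : {x : ℝ | s < 1} = ∅ := eq_empty_of_forall_notMem fun x hx =>
        (not_lt.2 h1) hx
      rw [he, measure_empty]
      exact zero_le
  rw [rearrangement, hset, csInf_Ici]

lemma key_le {p : ℝ} (hp : 1 < p) {f : ℝ → ℝ} (hf : Measurable f)
    (hbdd : BddAbove ((fun t : ℝ => t ^ (1/p) * rearrangement f t) '' Set.Ioo (0:ℝ) 1)) :
    sSup ((fun t : ℝ => t ^ (1/p) * rearrangement f t) '' Set.Ioo (0:ℝ) 1)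
      ≤ sSup ((fun t : ℝ => t ^ (1/p) * maximalFn f t) '' Set.Ioo (0:ℝ) 1) := by
  have hp0 : (0:ℝ) < p := lt_trans zero_lt_one hp
  set A := sSup ((fun t : ℝ => t ^ (1/p) * rearrangement f t) '' Set.Ioo (0:ℝ) 1) with hA_def
  have h1p : (0:ℝ) < 1 - 1/p := by
    have : 1/p < 1 := by rw [div_lt_one hp0]; exact hp
    linarith
  have hA : ∀ s ∈ Set.Ioo (0:ℝ) 1, rearrangement f s ≤ A * s ^ (-(1/p)) := by
    intro s hs
    have h1 : s ^ (1/p) * rearrangement f s ≤ A := le_csSup hbdd ⟨s, hs, rfl⟩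
    have hsp : 0 < s ^ (1/p) := Real.rpow_pos_of_pos hs.1 _
    have h2 : rearrangement f s ≤ A / s ^ (1/p) :=
      (le_div_iff₀ hsp).2 (by rw [mul_comm]; exact h1)
    rwa [div_eq_mul_inv, ← Real.rpow_neg hs.1.le] at h2
  have hg' : ∀ t ∈ Set.Ioo (0:ℝ) 1,
      IntegrableOn (fun s : ℝ => A * s ^ (-(1/p))) (Set.Ioc 0 t) := by
    intro t ht
    have h1 : IntervalIntegrable (fun s : ℝ => s ^ (-(1/p))) volume 0 t :=
      intervalIntegral.intervalIntegrable_rpow' (by linarith [div_pos one_pos hp0])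
    have h2 := h1.const_mul A
    rwa [intervalIntegrable_iff_integrableOn_Ioc_of_le ht.1.le] at h2
  have hint : ∀ t ∈ Set.Ioo (0:ℝ) 1, IntegrableOn (rearrangement f) (Set.Ioc 0 t) := by
    intro t ht
    have hmeas : AEMeasurable (rearrangement f) (volume.restrict (Set.Ioc 0 t)) :=
      aemeasurable_restrict_of_antitoneOn measurableSet_Ioc
        ((rearr_antitoneOn hf).mono (fun x hx => hx.1))
    refine (hg' t ht).mono' hmeas.aestronglyMeasurable ?_
    refine (ae_restrict_iff' measurableSet_Ioc).2 (Filter.Eventually.of_forall fun s hs => ?_)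
    rw [Real.norm_eq_abs, abs_of_nonneg (rearr_nonneg f s)]
    exact hA s ⟨hs.1, lt_of_le_of_lt hs.2 ht.2⟩
  have hstar : ∀ t ∈ Set.Ioo (0:ℝ) 1, rearrangement f t ≤ maximalFn f t := by
    intro t ht
    have hconst : ∫ _ in Set.Ioc (0:ℝ) t, rearrangement f t = t * rearrangement f t := by
      rw [setIntegral_const, measureReal_def, Real.volume_Ioc, sub_zero, ENNReal.toReal_ofReal ht.1.le,
        smul_eq_mul]
    have hI : t * rearrangement f t ≤ ∫ s in Set.Ioc (0:ℝ) t, rearrangement f s := by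
      rw [← hconst]
      refine setIntegral_mono_on ?_ (hint t ht) measurableSet_Ioc ?_
      · exact integrableOn_const (by rw [Real.volume_Ioc]; exact ENNReal.ofReal_ne_top)
      · intro s hs
        exact rearr_antitoneOn hf hs.1 ht.1 hs.2
    rw [maximalFn, intervalIntegral.integral_of_le ht.1.le]
    calc rearrangement f t = t⁻¹ * (t * rearrangement f t) := by
          rw [← mul_assoc, inv_mul_cancel₀ (ne_of_gt ht.1), one_mul]
      _ ≤ t⁻¹ * ∫ s in Set.Ioc (0:ℝ) t, rearrangement f s :=
          mul_le_mul_of_nonneg_left hI (inv_nonneg.2 ht.1.le)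
  have hB : ∀ t ∈ Set.Ioo (0:ℝ) 1, t ^ (1/p) * maximalFn f t ≤ A * (1 - 1/p)⁻¹ := by
    intro t ht
    have hIub : ∫ s in Set.Ioc (0:ℝ) t, rearrangement f s ≤ A * (t ^ (1 - 1/p) / (1 - 1/p)) := by
      have h2 : ∫ s in Set.Ioc (0:ℝ) t, rearrangement f s
          ≤ ∫ s in Set.Ioc (0:ℝ) t, A * s ^ (-(1/p)) :=
        setIntegral_mono_on (hint t ht) (hg' t ht) measurableSet_Ioc
          (fun s hs => hA s ⟨hs.1, lt_of_le_of_lt hs.2 ht.2⟩)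
      have h3 : ∫ s in Set.Ioc (0:ℝ) t, A * s ^ (-(1/p)) = A * (t ^ (1 - 1/p) / (1 - 1/p)) := by
        rw [← intervalIntegral.integral_of_le ht.1.le, intervalIntegral.integral_const_mul,
          integral_rpow (Or.inl (by linarith [div_pos one_pos hp0]))]
        rw [Real.zero_rpow (ne_of_gt (by linarith : (0:ℝ) < -(1/p) + 1)), sub_zero]
        ring_nf
      linarith [h2, h3.le, h3.ge]
    have key0 : t ^ (1/p) * t⁻¹ * t ^ (1 - 1/p) = 1 := by
      rw [show t⁻¹ = t ^ (-1:ℝ) by rw [Real.rpow_neg_one], ← Real.rpow_add ht.1,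
        ← Real.rpow_add ht.1]
      rw [show 1/p + -1 + (1 - 1/p) = 0 by ring, Real.rpow_zero]
    have hnn : (0:ℝ) ≤ t ^ (1/p) * t⁻¹ := by
      have ht0 : (0:ℝ) < t := ht.1
      positivity
    calc t ^ (1/p) * maximalFn f t
        = t ^ (1/p) * t⁻¹ * ∫ s in Set.Ioc (0:ℝ) t, rearrangement f s := by
          rw [maximalFn, intervalIntegral.integral_of_le ht.1.le]; ring
      _ ≤ t ^ (1/p) * t⁻¹ * (A * (t ^ (1 - 1/p) / (1 - 1/p))) :=
          mul_le_mul_of_nonneg_left hIub hnn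
      _ = A * (1 - 1/p)⁻¹ * (t ^ (1/p) * t⁻¹ * t ^ (1 - 1/p)) := by
          field_simp
      _ = A * (1 - 1/p)⁻¹ := by rw [key0, mul_one]
  have bdd2 : BddAbove ((fun t : ℝ => t ^ (1/p) * maximalFn f t) '' Set.Ioo (0:ℝ) 1) := by
    refine ⟨A * (1 - 1/p)⁻¹, ?_⟩
    rintro y ⟨t, ht, rfl⟩
    exact hB t ht
  refine csSup_le ⟨_, ⟨1/2, by norm_num, rfl⟩⟩ ?_
  rintro y ⟨t, ht, rfl⟩
  calc t ^ (1/p) * rearrangement f t ≤ t ^ (1/p) * maximalFn f t :=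
        mul_le_mul_of_nonneg_left (hstar t ht) (Real.rpow_nonneg ht.1.le _)
    _ ≤ _ := le_csSup bdd2 ⟨t, ht, rfl⟩

lemma img_rpow {p : ℝ} (hp : 1 < p) :
    (fun t : ℝ => t ^ (1/p)) '' Set.Ioo (0:ℝ) 1 = Set.Ioo (0:ℝ) 1 := by
  have hp0 : (0:ℝ) < p := lt_trans zero_lt_one hp
  have hq : (0:ℝ) < 1/p := div_pos one_pos hp0
  ext y
  simp only [mem_image, mem_Ioo]
  constructor
  · rintro ⟨t, ⟨ht0, ht1⟩, rfl⟩
    exact ⟨Real.rpow_pos_of_pos ht0 _, Real.rpow_lt_one ht0.le ht1 hq⟩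
  · rintro ⟨hy0, hy1⟩
    refine ⟨y ^ p, ⟨Real.rpow_pos_of_pos hy0 _, Real.rpow_lt_one hy0.le hy1 hp0⟩, ?_⟩
    rw [← Real.rpow_mul hy0.le, mul_one_div_cancel (ne_of_gt hp0), Real.rpow_one]

lemma max_one' {t : ℝ} (ht : t ∈ Set.Ioo (0:ℝ) 1) : maximalFn (fun _ => (1:ℝ)) t = 1 := by
  have h1 : ∫ s in (0:ℝ)..t, rearrangement (fun _ => (1:ℝ)) s = ∫ _ in (0:ℝ)..t, (1:ℝ) := by
    refine intervalIntegral.integral_congr fun s hs => ?_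
    rw [uIcc_of_le ht.1.le] at hs
    exact rearr_one (lt_of_le_of_lt hs.2 ht.2)
  rw [maximalFn, h1, intervalIntegral.integral_const, sub_zero, smul_eq_mul, mul_one]
  exact inv_mul_cancel₀ (ne_of_gt ht.1)


/-- For `w_p(s) = s^{1/p}` with `p > 1`, `Θ(w_p) = 1`, where `Θ(w)` is the infimum,
over nonzero measurable `f` on `[0,1]` (with `0 < sup_t w(t)f*(t) < ∞`), of
`[sup_{t∈(0,1)} w(t)f**(t)] / [sup_{t∈(0,1)} w(t)f*(t)]`. -/
theorem stmt10 (p : ℝ) (hp : 1 < p) :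
    sInf {r : ℝ | ∃ f : ℝ → ℝ, Measurable f ∧
        0 < sSup ((fun t : ℝ => t ^ (1/p) * rearrangement f t) '' Set.Ioo (0:ℝ) 1) ∧
        BddAbove ((fun t : ℝ => t ^ (1/p) * rearrangement f t) '' Set.Ioo (0:ℝ) 1) ∧
        r = sSup ((fun t : ℝ => t ^ (1/p) * maximalFn f t) '' Set.Ioo (0:ℝ) 1) /
            sSup ((fun t : ℝ => t ^ (1/p) * rearrangement f t) '' Set.Ioo (0:ℝ) 1)}
      = 1 := by
  have e1 : (fun t : ℝ => t ^ (1/p) * rearrangement (fun _ => (1:ℝ)) t) '' Set.Ioo (0:ℝ) 1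
      = Set.Ioo (0:ℝ) 1 :=
    (image_congr fun t ht => by rw [rearr_one ht.2, mul_one]).trans (img_rpow hp)
  have e2 : (fun t : ℝ => t ^ (1/p) * maximalFn (fun _ => (1:ℝ)) t) '' Set.Ioo (0:ℝ) 1
      = Set.Ioo (0:ℝ) 1 :=
    (image_congr fun t ht => by rw [max_one' ht, mul_one]).trans (img_rpow hp)
  have h1mem : (1:ℝ) ∈ {r : ℝ | ∃ f : ℝ → ℝ, Measurable f ∧
      0 < sSup ((fun t : ℝ => t ^ (1/p) * rearrangement f t) '' Set.Ioo (0:ℝ) 1) ∧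
      BddAbove ((fun t : ℝ => t ^ (1/p) * rearrangement f t) '' Set.Ioo (0:ℝ) 1) ∧
      r = sSup ((fun t : ℝ => t ^ (1/p) * maximalFn f t) '' Set.Ioo (0:ℝ) 1) /
          sSup ((fun t : ℝ => t ^ (1/p) * rearrangement f t) '' Set.Ioo (0:ℝ) 1)} := by
    refine ⟨fun _ => (1:ℝ), measurable_const, ?_, ?_, ?_⟩
    · rw [e1, csSup_Ioo zero_lt_one]; norm_num
    · rw [e1]; exact bddAbove_Ioo
    · rw [e1, e2, csSup_Ioo zero_lt_one]; norm_num
  have hlb : ∀ r ∈ {r : ℝ | ∃ f : ℝ → ℝ, Measurable f ∧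
      0 < sSup ((fun t : ℝ => t ^ (1/p) * rearrangement f t) '' Set.Ioo (0:ℝ) 1) ∧
      BddAbove ((fun t : ℝ => t ^ (1/p) * rearrangement f t) '' Set.Ioo (0:ℝ) 1) ∧
      r = sSup ((fun t : ℝ => t ^ (1/p) * maximalFn f t) '' Set.Ioo (0:ℝ) 1) /
          sSup ((fun t : ℝ => t ^ (1/p) * rearrangement f t) '' Set.Ioo (0:ℝ) 1)},
      (1:ℝ) ≤ r := by
    rintro r ⟨f, hf, hpos, hbdd, rfl⟩
    exact (one_le_div hpos).2 (key_le hp hf hbdd)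
  exact le_antisymm (csInf_le ⟨1, hlb⟩ h1mem) (le_csInf ⟨1, h1mem⟩ hlb)
end

section
/- For the weight w_{p,q}(s) = s^{1/p}(|log s| + 1)^{1/q} with p > 1 and q > 0, the limit as κ → ∞ of K_κ := [sup_{t∈(0,1)} w_{p,q}(t)(1 - t^κ/(κ+1))]/[sup_{t∈(0,1)} w_{p,q}(t)(1 - t^κ)] equals 1; consequently Θ(w_{p,q}) = 1. -/
open MeasureTheory Set Real Filter

/-- The weight `w_{p,q}(s) = s^{1/p} (|log s| + 1)^{1/q}`. -/
noncomputable def wpq (p q s : ℝ) : ℝ := s ^ (1/p) * (|Real.log s| + 1) ^ (1/q)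

namespace Stmt15Aux

lemma wpq_pos {p q t : ℝ} (ht : 0 < t) : 0 < wpq p q t :=
  mul_pos (Real.rpow_pos_of_pos ht _) (Real.rpow_pos_of_pos (by positivity) _)

lemma wpq_bdd (p q : ℝ) (hp : 1 < p) (hq : 0 < q) :
    ∃ C : ℝ, 0 < C ∧ ∀ t ∈ Ioo (0:ℝ) 1, wpq p q t ≤ C := by
  obtain ⟨n, hn1, hqn⟩ : ∃ n : ℕ, 1 ≤ (n:ℝ) ∧ 1/q ≤ (n:ℝ) := by
    refine ⟨max 1 ⌈1/q⌉₊, ?_, ?_⟩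
    · exact_mod_cast Nat.one_le_cast.mpr (le_max_left 1 _)
    · exact le_trans (Nat.le_ceil _) (by exact_mod_cast le_max_right 1 ⌈1/q⌉₊)
  have hp0 : (0:ℝ) < p := lt_trans one_pos hp
  have hn0 : (0:ℝ) < n := lt_of_lt_of_le one_pos hn1
  refine ⟨(2*p*n)^n, by positivity, ?_⟩
  rintro t ⟨ht0, ht1⟩
  have hlog : Real.log t < 0 := Real.log_neg ht0 ht1
  set u : ℝ := -Real.log t with hu
  have hu0 : 0 < u := by simp only [hu]; linarith
  have habs : |Real.log t| = u := abs_of_neg hlog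
  have hw : wpq p q t = t ^ (1/p) * (u + 1) ^ (1/q) := by rw [wpq, habs]
  rcases le_total u 1 with h | h
  · have h1 : t ^ (1/p) ≤ 1 := Real.rpow_le_one ht0.le ht1.le (by positivity)
    have h2 : (u+1) ^ (1/q) ≤ (u+1) ^ (n:ℝ) :=
      Real.rpow_le_rpow_of_exponent_le (by linarith) hqn
    have h3 : (u+1) ^ (n:ℝ) = (u+1) ^ n := Real.rpow_natCast _ n
    have h4 : (u+1) ^ n ≤ (2*p*(n:ℝ)) ^ n := by
      apply pow_le_pow_left₀ (by linarith)
      nlinarith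
    rw [hw]
    calc t ^ (1/p) * (u+1)^(1/q) ≤ 1 * ((2*p*n)^n) := by
          apply mul_le_mul h1 (h2.trans (h3 ▸ h4)) (Real.rpow_nonneg (by linarith) _) one_pos.le
      _ = (2*p*n)^n := one_mul _
  · have hpn : 0 < p * n := by positivity
    have hexp : t ^ (1/p) = Real.exp (-(u/p)) := by
      rw [Real.rpow_def_of_pos ht0]
      congr 1
      rw [hu]
      field_simp
    have hkey : (u/(p*n)) ^ n ≤ Real.exp (u/p) := by
      have h5 : Real.exp (u/p) = (Real.exp (u/(p*n)))^n := by
        rw [← Real.exp_nat_mul]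
        congr 1
        field_simp
      rw [h5]
      apply pow_le_pow_left₀ (by positivity)
      linarith [Real.add_one_le_exp (u/(p*n))]
    have h6 : Real.exp (-(u/p)) ≤ ((u/(p*n))^n)⁻¹ := by
      rw [Real.exp_neg]
      exact inv_anti₀ (by positivity) hkey
    have h7 : (u+1)^(1/q) ≤ (2*u)^n := by
      calc (u+1)^(1/q) ≤ (u+1)^(n:ℝ) :=
            Real.rpow_le_rpow_of_exponent_le (by linarith) hqn
        _ = (u+1)^n := Real.rpow_natCast _ n
        _ ≤ (2*u)^n := pow_le_pow_left₀ (by linarith) (by linarith) n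
    have h8 : ((u/(p*n))^n)⁻¹ * (2*u)^n = (2*p*(n:ℝ))^n := by
      rw [← inv_pow, ← mul_pow]
      congr 1
      field_simp
    rw [hw]
    calc t^(1/p) * (u+1)^(1/q) ≤ ((u/(p*n))^n)⁻¹ * (2*u)^n := by
          apply mul_le_mul (hexp ▸ h6) h7 (Real.rpow_nonneg (by linarith) _) (by positivity)
      _ = (2*p*n)^n := h8

lemma bddAbove_img {h : ℝ → ℝ} {C : ℝ} (hbd : ∀ t ∈ Ioo (0:ℝ) 1, h t ≤ C) :
    BddAbove (h '' Ioo (0:ℝ) 1) := ⟨C, by rintro x ⟨t, ht, rfl⟩; exact hbd t ht⟩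

lemma img_nonempty (h : ℝ → ℝ) : (h '' Ioo (0:ℝ) 1).Nonempty :=
  (Set.nonempty_Ioo.mpr one_pos).image h

lemma sSup_le_sSup_of_le {g h : ℝ → ℝ} {C : ℝ}
    (hbd : ∀ t ∈ Ioo (0:ℝ) 1, h t ≤ C)
    (hgh : ∀ t ∈ Ioo (0:ℝ) 1, g t ≤ h t) :
    sSup (g '' Ioo (0:ℝ) 1) ≤ sSup (h '' Ioo (0:ℝ) 1) := by
  apply csSup_le (img_nonempty g)
  rintro x ⟨t, ht, rfl⟩
  exact le_trans (hgh t ht) (le_csSup (bddAbove_img hbd) ⟨t, ht, rfl⟩)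

lemma part1 (p q : ℝ) (hp : 1 < p) (hq : 0 < q) :
    Tendsto (fun κ : ℝ =>
        sSup ((fun t : ℝ => wpq p q t * (1 - t ^ κ / (κ + 1))) '' Ioo (0:ℝ) 1) /
        sSup ((fun t : ℝ => wpq p q t * (1 - t ^ κ)) '' Ioo (0:ℝ) 1))
      atTop (nhds 1) := by
  obtain ⟨C, hC0, hC⟩ := wpq_bdd p q hp hq
  set S := sSup ((fun t : ℝ => wpq p q t) '' Ioo (0:ℝ) 1) with hS
  have hbddw : BddAbove ((fun t : ℝ => wpq p q t) '' Ioo (0:ℝ) 1) := bddAbove_img hC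
  have hwS : ∀ t ∈ Ioo (0:ℝ) 1, wpq p q t ≤ S := fun t ht => le_csSup hbddw ⟨t, ht, rfl⟩
  have hS0 : 0 < S :=
    lt_of_lt_of_le (wpq_pos (by norm_num : (0:ℝ) < 1/2))
      (hwS (1/2) (by constructor <;> norm_num))
  have hNle : ∀ (κ : ℝ), ∀ t ∈ Ioo (0:ℝ) 1, wpq p q t * (1 - t^κ) ≤ wpq p q t := by
    intro κ t ht
    have h1 := Real.rpow_nonneg ht.1.le κ
    nlinarith [wpq_pos (p := p) (q := q) ht.1]
  have hMle : ∀ (κ : ℝ), 0 ≤ κ → ∀ t ∈ Ioo (0:ℝ) 1,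
      wpq p q t * (1 - t^κ/(κ+1)) ≤ wpq p q t := by
    intro κ hκ t ht
    have h1 := Real.rpow_nonneg ht.1.le κ
    have h2 : 0 ≤ t^κ/(κ+1) := by positivity
    nlinarith [wpq_pos (p := p) (q := q) ht.1]
  have hNM : ∀ (κ : ℝ), 0 ≤ κ → ∀ t ∈ Ioo (0:ℝ) 1,
      wpq p q t * (1 - t^κ) ≤ wpq p q t * (1 - t^κ/(κ+1)) := by
    intro κ hκ t ht
    have h1 := Real.rpow_nonneg ht.1.le κ
    have h2 : t^κ/(κ+1) ≤ t^κ := div_le_self h1 (by linarith)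
    nlinarith [wpq_pos (p := p) (q := q) ht.1]
  set N := fun κ : ℝ => sSup ((fun t : ℝ => wpq p q t * (1 - t ^ κ)) '' Ioo (0:ℝ) 1) with hN
  set M := fun κ : ℝ => sSup ((fun t : ℝ => wpq p q t * (1 - t ^ κ / (κ+1))) '' Ioo (0:ℝ) 1)
    with hM
  have hNleS : ∀ κ, N κ ≤ S := fun κ => sSup_le_sSup_of_le hC (hNle κ)
  have hNtend : Tendsto N atTop (nhds S) := by
    rw [tendsto_order]
    constructor
    · intro a ha
      obtain ⟨x, hxmem, hax⟩ :=
        exists_lt_of_lt_csSup (img_nonempty (fun t : ℝ => wpq p q t)) (hS ▸ ha)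
      obtain ⟨t, ht, rfl⟩ := hxmem
      have h0 : Tendsto (fun κ : ℝ => t ^ κ) atTop (nhds 0) :=
        tendsto_rpow_atTop_of_base_lt_one t (by linarith [ht.1]) ht.2
      have htend : Tendsto (fun κ : ℝ => wpq p q t * (1 - t ^ κ)) atTop (nhds (wpq p q t)) := by
        have h1 : Tendsto (fun κ : ℝ => (1:ℝ) - t ^ κ) atTop (nhds (1 - 0)) :=
          (tendsto_const_nhds : Tendsto (fun _ : ℝ => (1:ℝ)) atTop (nhds 1)).sub h0
        have := h1.const_mul (wpq p q t)
        simpa using this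
      filter_upwards [htend.eventually (eventually_gt_nhds hax)] with κ hκ
      refine lt_of_lt_of_le hκ (le_csSup ?_ ⟨t, ht, rfl⟩)
      exact bddAbove_img (fun t' ht' => (hNle κ t' ht').trans (hC t' ht'))
    · intro a ha
      exact Eventually.of_forall fun κ => lt_of_le_of_lt (hNleS κ) ha
  have hMtend : Tendsto M atTop (nhds S) := by
    apply tendsto_of_tendsto_of_tendsto_of_le_of_le' hNtend tendsto_const_nhds
    · filter_upwards [eventually_ge_atTop (0:ℝ)] with κ hκ
      exact sSup_le_sSup_of_le (fun t' ht' => (hMle κ hκ t' ht').trans (hC t' ht')) (hNM κ hκ)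
    · filter_upwards [eventually_ge_atTop (0:ℝ)] with κ hκ
      exact sSup_le_sSup_of_le hC (hMle κ hκ)
  have := hMtend.div hNtend (ne_of_gt hS0)
  rw [div_self (ne_of_gt hS0)] at this
  exact this

lemma re_nonneg (f : ℝ → ℝ) (t : ℝ) : 0 ≤ rearrangement f t :=
  Real.sInf_nonneg (fun _ hx => hx.1)

lemma re_set_nonempty (f : ℝ → ℝ) (hf : Measurable f) {t : ℝ} (ht : 0 < t) :
    {s : ℝ | 0 ≤ s ∧
      (volume.restrict (Set.Icc (0:ℝ) 1)) {x | s < |f x|} ≤ ENNReal.ofReal t}.Nonempty := by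
  set μ := volume.restrict (Set.Icc (0:ℝ) 1) with hμ
  have hmeas : ∀ s : ℝ, MeasurableSet {x : ℝ | s < |f x|} :=
    fun s => measurableSet_lt measurable_const hf.abs
  have hfin : μ {x : ℝ | ((0:ℕ):ℝ) < |f x|} ≠ ⊤ := by
    refine ne_top_of_le_ne_top (?_ : volume (Set.Icc (0:ℝ) 1) ≠ ⊤) ?_
    · simp [Real.volume_Icc]
    · rw [hμ, Measure.restrict_apply (hmeas _)]
      exact measure_mono inter_subset_right
  have hiter : Tendsto (fun n : ℕ => μ {x : ℝ | (n:ℝ) < |f x|}) atTop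
      (nhds (μ (⋂ n : ℕ, {x : ℝ | (n:ℝ) < |f x|}))) := by
    refine tendsto_measure_iInter_atTop (fun n => (hmeas n).nullMeasurableSet) ?_ ⟨0, hfin⟩
    intro a b hab x hx
    simp only [mem_setOf_eq] at hx ⊢
    exact lt_of_le_of_lt (by exact_mod_cast hab) hx
  have hempty : (⋂ n : ℕ, {x : ℝ | (n:ℝ) < |f x|}) = ∅ := by
    ext x
    simp only [mem_iInter, mem_setOf_eq, mem_empty_iff_false, iff_false, not_forall, not_lt]
    obtain ⟨n, hn⟩ := exists_nat_ge |f x|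
    exact ⟨n, hn⟩
  rw [hempty, measure_empty] at hiter
  have hlt : (0:ENNReal) < ENNReal.ofReal t := by simp [ht]
  obtain ⟨n, hn⟩ := (hiter.eventually (eventually_lt_nhds hlt)).exists
  exact ⟨n, Nat.cast_nonneg n, le_of_lt hn⟩

lemma re_antitoneOn (f : ℝ → ℝ) (hf : Measurable f) :
    AntitoneOn (rearrangement f) (Ioi (0:ℝ)) := by
  intro a ha b _ hab
  apply csInf_le_csInf ⟨0, fun x hx => hx.1⟩ (re_set_nonempty f hf ha)
  intro s hs
  exact ⟨hs.1, le_trans hs.2 (ENNReal.ofReal_le_ofReal hab)⟩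

lemma lower (p q : ℝ) (hp : 1 < p) (hq : 0 < q) (f : ℝ → ℝ) (hf : Measurable f)
    (hpos : 0 < sSup ((fun t : ℝ => wpq p q t * rearrangement f t) '' Ioo (0:ℝ) 1))
    (hbdd : BddAbove ((fun t : ℝ => wpq p q t * rearrangement f t) '' Ioo (0:ℝ) 1)) :
    1 ≤ sSup ((fun t : ℝ => wpq p q t * maximalFn f t) '' Ioo (0:ℝ) 1) /
        sSup ((fun t : ℝ => wpq p q t * rearrangement f t) '' Ioo (0:ℝ) 1) := by
  have hp0 : (0:ℝ) < p := by linarith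
  have hp1 : 1/p < 1 := by rw [div_lt_one hp0]; exact hp
  have hp2 : (0:ℝ) < 1/p := by positivity
  set c : ℝ := -(1/p) + 1 with hc
  have hc0 : 0 < c := by rw [hc]; linarith
  set A := sSup ((fun t : ℝ => wpq p q t * rearrangement f t) '' Ioo (0:ℝ) 1) with hA
  have hwre : ∀ t ∈ Ioo (0:ℝ) 1, wpq p q t * rearrangement f t ≤ A :=
    fun t ht => le_csSup hbdd ⟨t, ht, rfl⟩
  -- pointwise bound on the rearrangement
  have hre_le : ∀ s ∈ Ioo (0:ℝ) 1,
      rearrangement f s ≤ A * (s ^ (-(1/p)) * (-Real.log s + 1) ^ (-(1/q))) := by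
    intro s hs
    have hws : 0 < wpq p q s := wpq_pos hs.1
    have hlog : |Real.log s| = -Real.log s := abs_of_neg (Real.log_neg hs.1 hs.2)
    have h1 : rearrangement f s ≤ A / wpq p q s := by
      rw [le_div_iff₀ hws]
      linarith [hwre s hs, mul_comm (wpq p q s) (rearrangement f s)]
    refine h1.trans (le_of_eq ?_)
    have hls : Real.log s < 0 := Real.log_neg hs.1 hs.2
    rw [wpq, hlog, Real.rpow_neg hs.1.le, Real.rpow_neg (by linarith : (0:ℝ) ≤ -Real.log s + 1),
      div_eq_mul_inv, mul_inv]
  have hre_le' : ∀ s ∈ Ioo (0:ℝ) 1, rearrangement f s ≤ A * s ^ (-(1/p)) := by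
    intro s hs
    refine (hre_le s hs).trans ?_
    have hL : (1:ℝ) ≤ -Real.log s + 1 := by
      have := Real.log_neg hs.1 hs.2; linarith
    have h2 : (-Real.log s + 1) ^ (-(1/q)) ≤ 1 :=
      Real.rpow_le_one_of_one_le_of_nonpos hL (neg_nonpos.mpr (by positivity))
    have h3 : (0:ℝ) ≤ s ^ (-(1/p)) := Real.rpow_nonneg hs.1.le _
    exact mul_le_mul_of_nonneg_left (mul_le_of_le_one_right h3 h2) hpos.le
  -- facts for a fixed t
  have main : ∀ t ∈ Ioo (0:ℝ) 1,
      wpq p q t * rearrangement f t ≤ wpq p q t * maximalFn f t ∧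
      wpq p q t * maximalFn f t ≤ A / c := by
    rintro t ht
    obtain ⟨ht0, ht1⟩ := ht
    have hsub : Ioc (0:ℝ) t ⊆ Ioo (0:ℝ) 1 := fun s hs => ⟨hs.1, lt_of_le_of_lt hs.2 ht1⟩
    have hint_rpow : IntegrableOn (fun s : ℝ => s ^ (-(1/p))) (Ioc 0 t) volume := by
      have := intervalIntegral.intervalIntegrable_rpow' (a := 0) (b := t)
        (by linarith : (-1:ℝ) < -(1/p))
      rwa [intervalIntegrable_iff_integrableOn_Ioc_of_le ht0.le] at this
    have hmeas_re : AEMeasurable (rearrangement f) (volume.restrict (Ioc 0 t)) :=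
      aemeasurable_restrict_of_antitoneOn measurableSet_Ioc
        ((re_antitoneOn f hf).mono (fun s hs => hs.1))
    have hae : ∀ᵐ s ∂(volume.restrict (Ioc 0 t)),
        ‖rearrangement f s‖ ≤ A * s ^ (-(1/p)) := by
      rw [ae_restrict_iff' measurableSet_Ioc]
      refine Eventually.of_forall (fun s hs => ?_)
      rw [Real.norm_eq_abs, abs_of_nonneg (re_nonneg f s)]
      exact hre_le' s (hsub hs)
    have hint_re : IntegrableOn (rearrangement f) (Ioc 0 t) volume :=
      Integrable.mono' (hint_rpow.const_mul A) hmeas_re.aestronglyMeasurable hae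
    -- lower bound on the integral
    have h5 : t * rearrangement f t ≤ ∫ s in Ioc (0:ℝ) t, rearrangement f s := by
      have e0 : ∫ _ in Ioc (0:ℝ) t, rearrangement f t = t * rearrangement f t := by
        rw [setIntegral_const, Real.volume_real_Ioc, sub_zero, max_eq_left ht0.le,
          smul_eq_mul]
      rw [← e0]
      refine setIntegral_mono_on ?_ hint_re measurableSet_Ioc (fun s hs => ?_)
      · exact integrableOn_const (by rw [Real.volume_Ioc]; exact ENNReal.ofReal_ne_top)
      · exact re_antitoneOn f hf hs.1 ht0 hs.2
    have hIoc : ∫ s in (0:ℝ)..t, rearrangement f s = ∫ s in Ioc (0:ℝ) t, rearrangement f s :=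
      intervalIntegral.integral_of_le ht0.le
    constructor
    · -- w t * re t ≤ w t * maximalFn t
      have hwt : 0 < wpq p q t := wpq_pos ht0
      have : rearrangement f t ≤ maximalFn f t := by
        rw [maximalFn, hIoc]
        rw [show rearrangement f t = t⁻¹ * (t * rearrangement f t) by field_simp]
        exact mul_le_mul_of_nonneg_left h5 (by positivity)
      exact mul_le_mul_of_nonneg_left this hwt.le
    · -- upper bound
      set E : ℝ := -Real.log t + 1 with hE
      have hE1 : (1:ℝ) ≤ E := by
        have := Real.log_neg ht0 ht1; rw [hE]; linarith
      have hE0 : (0:ℝ) < E := by linarith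
      have h6 : ∫ s in Ioc (0:ℝ) t, rearrangement f s ≤
          ∫ s in Ioc (0:ℝ) t, (A * E ^ (-(1/q))) * s ^ (-(1/p)) := by
        refine setIntegral_mono_on hint_re ((hint_rpow.const_mul _)) measurableSet_Ioc
          (fun s hs => ?_)
        have hs' := hsub hs
        refine (hre_le s hs').trans ?_
        have hbase : E ≤ -Real.log s + 1 := by
          have : Real.log s ≤ Real.log t :=
            Real.log_le_log hs'.1 hs.2
          rw [hE]; linarith
        have h7 : (-Real.log s + 1) ^ (-(1/q)) ≤ E ^ (-(1/q)) := by
          rw [Real.rpow_neg hE0.le, Real.rpow_neg (by linarith : (0:ℝ) ≤ -Real.log s + 1)]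
          exact inv_anti₀ (Real.rpow_pos_of_pos hE0 _)
            (Real.rpow_le_rpow hE0.le hbase (by positivity))
        have hA0 : (0:ℝ) < A := hpos
        have h8 : (0:ℝ) ≤ s ^ (-(1/p)) := Real.rpow_nonneg hs'.1.le _
        calc A * (s ^ (-(1/p)) * (-Real.log s + 1) ^ (-(1/q)))
            ≤ A * (s ^ (-(1/p)) * E ^ (-(1/q))) :=
              mul_le_mul_of_nonneg_left (mul_le_mul_of_nonneg_left h7 h8) hA0.le
          _ = (A * E ^ (-(1/q))) * s ^ (-(1/p)) := by ring
      have h9 : ∫ s in Ioc (0:ℝ) t, (A * E ^ (-(1/q))) * s ^ (-(1/p)) =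
          (A * E ^ (-(1/q))) * (t ^ c / c) := by
        rw [integral_const_mul]
        congr 1
        rw [← intervalIntegral.integral_of_le ht0.le,
          integral_rpow (Or.inl (by linarith : (-1:ℝ) < -(1/p))),
          Real.zero_rpow (by linarith : -(1/p) + 1 ≠ 0), ← hc, sub_zero]
      -- combine
      have hwt : 0 < wpq p q t := wpq_pos ht0
      have hlogt : |Real.log t| = -Real.log t := abs_of_neg (Real.log_neg ht0 ht1)
      have hI : ∫ s in Ioc (0:ℝ) t, rearrangement f s ≤ (A * E ^ (-(1/q))) * (t ^ c / c) :=
        h6.trans (le_of_eq h9)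
      have hfinal : wpq p q t * maximalFn f t ≤
          (wpq p q t * t⁻¹) * ((A * E ^ (-(1/q))) * (t ^ c / c)) := by
        rw [maximalFn, hIoc, ← mul_assoc]
        exact mul_le_mul_of_nonneg_left hI (by positivity)
      refine hfinal.trans (le_of_eq ?_)
      have e1 : t ^ (1/p) * t⁻¹ * t ^ c = 1 := by
        rw [← Real.rpow_neg_one t, ← Real.rpow_add ht0, ← Real.rpow_add ht0, hc,
          show 1/p + -1 + (-(1/p) + 1) = (0:ℝ) by ring, Real.rpow_zero]
      have e2 : E ^ (1/q) * E ^ (-(1/q)) = 1 := by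
        rw [← Real.rpow_add hE0]
        norm_num
      have ew : wpq p q t = t ^ (1/p) * E ^ (1/q) := by rw [wpq, hlogt, hE]
      calc (wpq p q t * t⁻¹) * ((A * E ^ (-(1/q))) * (t ^ c / c))
          = (A / c) * ((t ^ (1/p) * t⁻¹ * t ^ c) * (E ^ (1/q) * E ^ (-(1/q)))) := by
            rw [ew]; ring
        _ = A / c := by rw [e1, e2]; ring
  -- conclude
  have hbdd2 : BddAbove ((fun t : ℝ => wpq p q t * maximalFn f t) '' Ioo (0:ℝ) 1) :=
    bddAbove_img (fun t ht => (main t ht).2)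
  have hle : A ≤ sSup ((fun t : ℝ => wpq p q t * maximalFn f t) '' Ioo (0:ℝ) 1) := by
    rw [hA]
    apply csSup_le (img_nonempty _)
    rintro x ⟨t, ht, rfl⟩
    exact le_trans (main t ht).1 (le_csSup hbdd2 ⟨t, ht, rfl⟩)
  exact (one_le_div hpos).mpr hle

lemma re_test {κ : ℝ} (hκ : 1 ≤ κ) {t : ℝ} (ht : t ∈ Ioo (0:ℝ) 1) :
    rearrangement (fun x : ℝ => 1 - x ^ κ) t = 1 - t ^ κ := by
  have hκ0 : 0 < κ := by linarith
  obtain ⟨ht0, ht1⟩ := ht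
  have htκ0 : 0 ≤ t ^ κ := Real.rpow_nonneg ht0.le κ
  have htκ1 : t ^ κ ≤ 1 := Real.rpow_le_one ht0.le ht1.le hκ0.le
  have hmeas : ∀ s : ℝ, MeasurableSet {x : ℝ | s < |1 - x ^ κ|} :=
    fun s => measurableSet_lt measurable_const (by fun_prop)
  have hcalc : ∀ s : ℝ, 0 ≤ s → s < 1 →
      (volume.restrict (Set.Icc (0:ℝ) 1)) {x : ℝ | s < |1 - x ^ κ|}
        = ENNReal.ofReal ((1-s) ^ κ⁻¹) := by
    intro s hs0 hs1
    rw [Measure.restrict_apply (hmeas s)]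
    have hEq : {x : ℝ | s < |1 - x ^ κ|} ∩ Set.Icc (0:ℝ) 1 = Ico 0 ((1-s) ^ κ⁻¹) := by
      ext x
      simp only [mem_inter_iff, mem_setOf_eq, mem_Icc, mem_Ico]
      constructor
      · rintro ⟨hlt, hx0, hx1⟩
        have hxκ0 : 0 ≤ x ^ κ := Real.rpow_nonneg hx0 κ
        have hxκ1 : x ^ κ ≤ 1 := Real.rpow_le_one hx0 hx1 hκ0.le
        rw [abs_of_nonneg (by linarith)] at hlt
        exact ⟨hx0, (Real.lt_rpow_inv_iff_of_pos hx0 (by linarith) hκ0).mpr (by linarith)⟩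
      · rintro ⟨hx0, hxlt⟩
        have hc1 : (1-s) ^ κ⁻¹ ≤ 1 :=
          Real.rpow_le_one (by linarith) (by linarith) (by positivity)
        have hx1 : x ≤ 1 := le_trans hxlt.le hc1
        have hxκ0 : 0 ≤ x ^ κ := Real.rpow_nonneg hx0 κ
        have hxκ : x ^ κ < 1 - s := (Real.lt_rpow_inv_iff_of_pos hx0 (by linarith) hκ0).mp hxlt
        rw [abs_of_nonneg (by linarith)]
        exact ⟨by linarith, hx0, hx1⟩
    rw [hEq, Real.volume_Ico, sub_zero]
  have hset : {s : ℝ | 0 ≤ s ∧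
      (volume.restrict (Set.Icc (0:ℝ) 1)) {x | s < |(fun x : ℝ => 1 - x ^ κ) x|}
        ≤ ENNReal.ofReal t} = Ici (1 - t ^ κ) := by
    ext s
    simp only [mem_setOf_eq, mem_Ici]
    constructor
    · rintro ⟨hs0, hμ⟩
      rcases le_or_gt 1 s with h1 | h1
      · linarith
      · rw [hcalc s hs0 h1] at hμ
        have h2 : (1-s) ^ κ⁻¹ ≤ t := (ENNReal.ofReal_le_ofReal_iff ht0.le).mp hμ
        have h3 : 1 - s ≤ t ^ κ := (Real.rpow_inv_le_iff_of_pos (by linarith) ht0.le hκ0).mp h2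
        linarith
    · intro hst
      have hs0 : 0 ≤ s := by linarith
      refine ⟨hs0, ?_⟩
      rcases le_or_gt 1 s with h1 | h1
      · have hEmp : {x : ℝ | s < |1 - x ^ κ|} ∩ Set.Icc (0:ℝ) 1 = ∅ := by
          apply eq_empty_iff_forall_notMem.mpr
          rintro x ⟨hlt, hx0, hx1⟩
          simp only [mem_setOf_eq] at hlt
          have hxκ0 : 0 ≤ x ^ κ := Real.rpow_nonneg hx0 κ
          have hxκ1 : x ^ κ ≤ 1 := Real.rpow_le_one hx0 hx1 hκ0.le
          rw [abs_of_nonneg (by linarith)] at hlt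
          linarith
        rw [Measure.restrict_apply (hmeas s), hEmp, measure_empty]
        exact zero_le
      · rw [hcalc s hs0 h1]
        apply ENNReal.ofReal_le_ofReal
        exact (Real.rpow_inv_le_iff_of_pos (by linarith) ht0.le hκ0).mpr (by linarith)
  rw [rearrangement, hset, csInf_Ici]

lemma max_test {κ : ℝ} (hκ : 1 ≤ κ) {t : ℝ} (ht : t ∈ Ioo (0:ℝ) 1) :
    maximalFn (fun x : ℝ => 1 - x ^ κ) t = 1 - t ^ κ / (κ + 1) := by
  obtain ⟨ht0, ht1⟩ := ht
  have hκ0 : 0 < κ := by linarith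
  have h1 : ∫ s in (0:ℝ)..t, rearrangement (fun x : ℝ => 1 - x ^ κ) s
      = ∫ s in (0:ℝ)..t, (1 - s ^ κ) := by
    rw [intervalIntegral.integral_of_le ht0.le, intervalIntegral.integral_of_le ht0.le]
    apply setIntegral_congr_fun measurableSet_Ioc
    intro s hs
    exact re_test hκ ⟨hs.1, lt_of_le_of_lt hs.2 ht1⟩
  have h2 : ∫ s in (0:ℝ)..t, (1 - s ^ κ) = t - t ^ (κ+1) / (κ+1) := by
    rw [intervalIntegral.integral_sub intervalIntegrable_const
      (intervalIntegral.intervalIntegrable_rpow' (by linarith : (-1:ℝ) < κ)),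
      intervalIntegral.integral_const,
      integral_rpow (Or.inl (by linarith : (-1:ℝ) < κ)),
      Real.zero_rpow (by linarith : κ + 1 ≠ 0)]
    simp
  rw [maximalFn, h1, h2]
  have htκ : t ^ (κ+1) = t ^ κ * t := by rw [Real.rpow_add ht0, Real.rpow_one]
  rw [htκ]
  field_simp


end Stmt15Aux

/-- For `w_{p,q}(s) = s^{1/p}(|log s|+1)^{1/q}` with `p > 1`, `q > 0`:
`K_κ = [sup_{t∈(0,1)} w(t)(1 - t^κ/(κ+1))]/[sup_{t∈(0,1)} w(t)(1 - t^κ)] → 1`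
as `κ → ∞`, and consequently `Θ(w_{p,q}) = 1`. -/
theorem stmt15 (p q : ℝ) (hp : 1 < p) (hq : 0 < q) :
    Filter.Tendsto (fun κ : ℝ =>
        sSup ((fun t : ℝ => wpq p q t * (1 - t ^ κ / (κ + 1))) '' Set.Ioo (0:ℝ) 1) /
        sSup ((fun t : ℝ => wpq p q t * (1 - t ^ κ)) '' Set.Ioo (0:ℝ) 1))
      Filter.atTop (nhds 1)
    ∧
    sInf {r : ℝ | ∃ f : ℝ → ℝ, Measurable f ∧
        0 < sSup ((fun t : ℝ => wpq p q t * rearrangement f t) '' Set.Ioo (0:ℝ) 1) ∧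
        BddAbove ((fun t : ℝ => wpq p q t * rearrangement f t) '' Set.Ioo (0:ℝ) 1) ∧
        r = sSup ((fun t : ℝ => wpq p q t * maximalFn f t) '' Set.Ioo (0:ℝ) 1) /
            sSup ((fun t : ℝ => wpq p q t * rearrangement f t) '' Set.Ioo (0:ℝ) 1)}
      = 1 := by
  have hpart1 := Stmt15Aux.part1 p q hp hq
  refine ⟨hpart1, ?_⟩
  set R := {r : ℝ | ∃ f : ℝ → ℝ, Measurable f ∧
      0 < sSup ((fun t : ℝ => wpq p q t * rearrangement f t) '' Set.Ioo (0:ℝ) 1) ∧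
      BddAbove ((fun t : ℝ => wpq p q t * rearrangement f t) '' Set.Ioo (0:ℝ) 1) ∧
      r = sSup ((fun t : ℝ => wpq p q t * maximalFn f t) '' Set.Ioo (0:ℝ) 1) /
          sSup ((fun t : ℝ => wpq p q t * rearrangement f t) '' Set.Ioo (0:ℝ) 1)} with hR
  obtain ⟨C, hC0, hC⟩ := Stmt15Aux.wpq_bdd p q hp hq
  have hmem : ∀ κ : ℝ, 1 ≤ κ →
      (sSup ((fun t : ℝ => wpq p q t * (1 - t ^ κ / (κ + 1))) '' Set.Ioo (0:ℝ) 1) /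
       sSup ((fun t : ℝ => wpq p q t * (1 - t ^ κ)) '' Set.Ioo (0:ℝ) 1)) ∈ R := by
    intro κ hκ
    have hκ0 : 0 < κ := by linarith
    have himg_re : (fun t : ℝ => wpq p q t * rearrangement (fun x : ℝ => 1 - x ^ κ) t) ''
          Set.Ioo (0:ℝ) 1
        = (fun t : ℝ => wpq p q t * (1 - t ^ κ)) '' Set.Ioo (0:ℝ) 1 :=
      Set.image_congr (fun t ht => by rw [Stmt15Aux.re_test hκ ht])
    have himg_max : (fun t : ℝ => wpq p q t * maximalFn (fun x : ℝ => 1 - x ^ κ) t) ''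
          Set.Ioo (0:ℝ) 1
        = (fun t : ℝ => wpq p q t * (1 - t ^ κ / (κ + 1))) '' Set.Ioo (0:ℝ) 1 :=
      Set.image_congr (fun t ht => by rw [Stmt15Aux.max_test hκ ht])
    have hbddre : BddAbove ((fun t : ℝ => wpq p q t * (1 - t ^ κ)) '' Set.Ioo (0:ℝ) 1) := by
      apply Stmt15Aux.bddAbove_img (C := C)
      intro t ht
      refine le_trans ?_ (hC t ht)
      have h1 := Real.rpow_nonneg ht.1.le κ
      nlinarith [Stmt15Aux.wpq_pos (p := p) (q := q) ht.1]
    refine ⟨fun x => 1 - x ^ κ, by fun_prop, ?_, ?_, ?_⟩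
    · rw [himg_re]
      have hhalf : ((1:ℝ)/2) ∈ Set.Ioo (0:ℝ) 1 := by norm_num
      have hlt1 : ((1:ℝ)/2) ^ κ < 1 :=
        Real.rpow_lt_one (by norm_num) (by norm_num) hκ0
      have hw := Stmt15Aux.wpq_pos (p := p) (q := q) (show (0:ℝ) < 1/2 by norm_num)
      have h12 : (0:ℝ) < wpq p q (1/2) * (1 - (1/2:ℝ) ^ κ) := by nlinarith
      exact lt_of_lt_of_le h12 (le_csSup hbddre ⟨1/2, hhalf, rfl⟩)
    · rw [himg_re]; exact hbddre
    · rw [himg_re, himg_max]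
  have hlb : ∀ r ∈ R, (1:ℝ) ≤ r := by
    rintro r ⟨f, hf, hpos, hbdd, rfl⟩
    exact Stmt15Aux.lower p q hp hq f hf hpos hbdd
  have hne : R.Nonempty := ⟨_, hmem 1 le_rfl⟩
  have hbddb : BddBelow R := ⟨1, fun r hr => hlb r hr⟩
  apply le_antisymm
  · by_contra hcon
    push_neg at hcon
    have hcon' : (1:ℝ) < sInf R := hcon
    obtain ⟨κ, hκlt, hκ1⟩ :=
      ((hpart1.eventually (eventually_lt_nhds hcon')).and (eventually_ge_atTop (1:ℝ))).exists
    have h1 : sInf R ≤ _ := csInf_le hbddb (hmem κ hκ1)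
    exact absurd h1 (not_le.mpr hκlt)
  · exact le_csInf hne hlb
end
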